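/- arXiv:1611.02268 — 3 statements merged into one kernel-verified Lean document; each statement's English description precedes it below -/
import Mathlib

section
/- Let n, V, H be positive integers, let E ∈ [−1,1]^{H×n} be a matrix with columns e⁽¹⁾,…,e⁽ⁿ⁾ ∈ [−1,1]^H, and let B ∈ ℝ^{V×H} have rows b_1,…,b_V ∈ ℝ^H. Assume the feasible set is nonempty: there exists X ∈ [−1,1]^{V×n} with rows x_1,…,x_V ∈ [−1,1]^n satisfying (1/n)·E·x_v = b_v for every v ∈ {1,…,V}. Then the minimax value inf over reconstructions X̃ ∈ (−1,1)^{V×n} of the supremum over feasible X ∈ [−1,1]^{V×n} (those with (1/n)·E·x_v = b_v for all v) of the average cross-entropy loss (1/n)·Σ_{i=1}^n ℓ(x⁽ⁱ⁾, x̃⁽ⁱ⁾) equals (1/2)·Σ_{v=1}^V inf_{w ∈ ℝ^H} γ^E(w, b_v). -/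
/-!
With the reconstruction `x̃ᵢ = tanh (wᵀe⁽ⁱ⁾ / 2)`, `Ψ' = tanh (· / 2)` turns the cross entropy of
a bit `x` into `(Ψ (wᵀe⁽ⁱ⁾) - x wᵀe⁽ⁱ⁾) / 2`, and the constraint `(1/n) E x = b` fixes the part
linear in `x`: against every feasible `X` the loss equals `½ Σᵥ γ(wᵥ, bᵥ)`, which gives `≤`.
Conversely, by Gibbs' inequality the loss of any reconstruction is at least the mean binary
entropy of `X`, so `≥` follows once each row admits a feasible `x` with mean entropy at least
`½ inf γ` (strong duality between `γ` and entropy maximization); such an `x` is a limit point of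
`tanh (wᵀE / 2)` along minimizers `w` of `γ(w, b) + δ ‖w‖²` as `δ → 0`.
-/

/-- The potential well `Ψ(m) = ln(1+eᵐ) + ln(1+e⁻ᵐ)`. -/
noncomputable def Psi (m : ℝ) : ℝ := Real.log (1 + Real.exp m) + Real.log (1 + Real.exp (-m))

/-- Cross-entropy reconstruction loss between `x ∈ [-1,1]^V` and `x̃ ∈ (-1,1)^V`. -/
noncomputable def xent {V : ℕ} (x xt : Fin V → ℝ) : ℝ :=
  ∑ v, ((1 + x v) / 2 * Real.log (2 / (1 + xt v)) + (1 - x v) / 2 * Real.log (2 / (1 - xt v)))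

/-- The bitwise slack function `γ^E(w, b) = -bᵀw + (1/n)·Σᵢ Ψ(wᵀe⁽ⁱ⁾)`. -/
noncomputable def slack {n H : ℕ} (E : Fin H → Fin n → ℝ) (w b : Fin H → ℝ) : ℝ :=
  -(∑ h, b h * w h) + (1 / (n : ℝ)) * ∑ i, Psi (∑ h, w h * E h i)

open Real Set Filter Topology Matrix

/-- `tanhHalf m = tanh (m / 2)`, the derivative of `Psi`. -/
noncomputable def tanhHalf (m : ℝ) : ℝ := (exp m - 1) / (exp m + 1)

noncomputable def bitXent (x t : ℝ) : ℝ :=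
  (1 + x) / 2 * log (2 / (1 + t)) + (1 - x) / 2 * log (2 / (1 - t))

lemma xent_eq_sum_bitXent {V : ℕ} (x xt : Fin V → ℝ) : xent x xt = ∑ v, bitXent (x v) (xt v) :=
  rfl

lemma tanhHalf_mem_Ioo (m : ℝ) : tanhHalf m ∈ Ioo (-1 : ℝ) 1 := by
  have hpos : 0 < exp m + 1 := by positivity
  constructor
  · rw [tanhHalf, lt_div_iff₀ hpos]; linarith [exp_pos m]
  · rw [tanhHalf, div_lt_one hpos]; linarith

lemma Psi_eq (m : ℝ) : Psi m = 2 * log (1 + exp m) - m := by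
  have h : 1 + exp (-m) = (1 + exp m) / exp m := by
    rw [exp_neg]; field_simp; ring
  rw [Psi, h, log_div (by positivity) (exp_pos m).ne', log_exp]
  ring

lemma Psi_zero : Psi 0 = 2 * log 2 := by
  norm_num [Psi_eq, one_add_one_eq_two]

lemma abs_le_Psi (m : ℝ) : |m| ≤ Psi m := by
  have hm : m ≤ log (1 + exp m) := ((lt_log_iff_exp_lt (by positivity)).2 (by linarith)).le
  have h0 : 0 ≤ log (1 + exp m) := log_nonneg (by linarith [exp_pos m])
  rw [Psi_eq, abs_le]
  constructor <;> linarith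

lemma mul_le_Psi {x : ℝ} (m : ℝ) (hx : x ∈ Icc (-1 : ℝ) 1) : m * x ≤ Psi m :=
  calc m * x ≤ |m| * |x| := (le_abs_self _).trans (abs_mul m x).le
    _ ≤ |m| := mul_le_of_le_one_right (abs_nonneg m) (abs_le.2 hx)
    _ ≤ Psi m := abs_le_Psi m

lemma hasDerivAt_Psi (m : ℝ) : HasDerivAt Psi (tanhHalf m) m := by
  have hpos : 0 < 1 + exp m := by positivity
  rw [show Psi = fun y => 2 * log (1 + exp y) - y from funext Psi_eq]
  refine ((((hasDerivAt_exp m).const_add 1).log hpos.ne').const_mul 2).fun_sub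
    (hasDerivAt_id' m) |>.congr_deriv ?_
  rw [tanhHalf]; field_simp; ring

@[fun_prop]
lemma continuous_Psi : Continuous Psi :=
  continuous_iff_continuousAt.2 fun m => (hasDerivAt_Psi m).continuousAt

lemma bitXent_tanhHalf (x m : ℝ) : bitXent x (tanhHalf m) = (Psi m - m * x) / 2 := by
  have h₁ : 2 / (1 + tanhHalf m) = (1 + exp m) / exp m := by
    rw [tanhHalf]; field_simp; ring
  have h₂ : 2 / (1 - tanhHalf m) = 1 + exp m := by
    rw [tanhHalf]; field_simp; ring
  rw [bitXent, h₁, h₂, log_div (by positivity) (exp_pos m).ne', log_exp, Psi_eq]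
  ring

lemma bitXent_eq_mul_log_inv_add (x t : ℝ) :
    bitXent x t
      = (1 + x) / 2 * log ((1 + t) / 2)⁻¹ + (1 - (1 + x) / 2) * log (1 - (1 + t) / 2)⁻¹ := by
  rw [bitXent, inv_div, show 1 - (1 + t) / 2 = (1 - t) / 2 by ring, inv_div]
  ring

lemma bitXent_self (t : ℝ) : bitXent t t = binEntropy ((1 + t) / 2) := by
  rw [bitXent_eq_mul_log_inv_add, binEntropy]

lemma Psi_sub_mul_tanhHalf (m : ℝ) :
    Psi m - m * tanhHalf m = 2 * binEntropy ((1 + tanhHalf m) / 2) := by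
  rw [← bitXent_self, bitXent_tanhHalf]
  ring

lemma mul_log_le_mul_log_add_sub {p q : ℝ} (hp : 0 ≤ p) (hq : 0 < q) :
    p * log q ≤ p * log p + (q - p) := by
  rcases hp.eq_or_lt with rfl | hp
  · simpa using hq.le
  have h := mul_le_mul_of_nonneg_left (log_le_sub_one_of_pos (div_pos hq hp)) hp.le
  rw [log_div hq.ne' hp.ne', mul_sub, mul_sub, mul_div_cancel₀ _ hp.ne', mul_one] at h
  linarith

lemma binEntropy_le_mul_log_inv_add {p q : ℝ} (hp : p ∈ Icc (0 : ℝ) 1) (hq : q ∈ Ioo (0 : ℝ) 1) :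
    binEntropy p ≤ p * log q⁻¹ + (1 - p) * log (1 - q)⁻¹ := by
  have h₁ := mul_log_le_mul_log_add_sub hp.1 hq.1
  have h₂ := mul_log_le_mul_log_add_sub (sub_nonneg.2 hp.2) (sub_pos.2 hq.2)
  simp only [binEntropy, log_inv]
  linarith

lemma binEntropy_le_bitXent {x t : ℝ} (hx : x ∈ Icc (-1 : ℝ) 1) (ht : t ∈ Ioo (-1 : ℝ) 1) :
    binEntropy ((1 + x) / 2) ≤ bitXent x t := by
  rw [bitXent_eq_mul_log_inv_add]
  exact binEntropy_le_mul_log_inv_add ⟨by linarith [hx.1], by linarith [hx.2]⟩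
    ⟨by linarith [ht.1], by linarith [ht.2]⟩

lemma bitXent_nonneg {x t : ℝ} (hx : x ∈ Icc (-1 : ℝ) 1) (ht : t ∈ Ioo (-1 : ℝ) 1) :
    0 ≤ bitXent x t :=
  (binEntropy_nonneg (by linarith [hx.1]) (by linarith [hx.2])).trans (binEntropy_le_bitXent hx ht)

lemma bitXent_le {x t : ℝ} (hx : x ∈ Icc (-1 : ℝ) 1) (ht : t ∈ Ioo (-1 : ℝ) 1) :
    bitXent x t ≤ log (2 / (1 + t)) + log (2 / (1 - t)) := by
  have h₁ : 0 ≤ log (2 / (1 + t)) :=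
    log_nonneg ((one_le_div (by linarith [ht.1])).2 (by linarith [ht.2]))
  have h₂ : 0 ≤ log (2 / (1 - t)) :=
    log_nonneg ((one_le_div (by linarith [ht.2])).2 (by linarith [ht.1]))
  rw [bitXent]
  nlinarith [hx.1, hx.2]

lemma sq_le_dotProduct_self {ι : Type*} [Fintype ι] (w : ι → ℝ) (h : ι) : w h ^ 2 ≤ w ⬝ᵥ w := by
  simpa [sq, dotProduct] using
    Finset.single_le_sum (fun j _ => mul_self_nonneg (w j)) (Finset.mem_univ h)

lemma dotProduct_self_nonneg {ι : Type*} [Fintype ι] (w : ι → ℝ) : 0 ≤ w ⬝ᵥ w :=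
  Finset.sum_nonneg fun i _ => mul_self_nonneg (w i)

lemma tendsto_smul_nhds_zero_of_mul_dotProduct_self_le {α ι : Type*} [Fintype ι] {l : Filter α}
    {δ : α → ℝ} {W : α → ι → ℝ} {C : ℝ} (hδ : Tendsto δ l (𝓝 0)) (hδ₀ : ∀ k, 0 ≤ δ k)
    (hW : ∀ k, δ k * (W k ⬝ᵥ W k) ≤ C) : Tendsto (fun k => δ k • W k) l (𝓝 0) := by
  refine tendsto_pi_nhds.2 fun h => squeeze_zero_norm (fun k => ?_) (a := fun k => √(C * δ k))
    (by simpa using (hδ.const_mul C).sqrt)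
  have hsq := mul_le_mul_of_nonneg_left (sq_le_dotProduct_self (W k) h) (hδ₀ k)
  refine Real.abs_le_sqrt ?_
  simp only [Pi.smul_apply, smul_eq_mul]
  nlinarith [hW k, hδ₀ k]

lemma exists_sum_lt_sum_ciInf_add {ι α : Type*} [Fintype ι] [Nonempty α] (f : ι → α → ℝ)
    {ε : ℝ} (hε : 0 < ε) : ∃ a : ι → α, ∑ i, f i (a i) < (∑ i, ⨅ x, f i x) + ε := by
  have hε' : 0 < ε / (Fintype.card ι + 1) := by positivity
  choose a ha using fun i => exists_lt_of_ciInf_lt (lt_add_of_pos_right (⨅ x, f i x) hε')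
  refine ⟨a, (Finset.sum_le_sum fun i _ => (ha i).le).trans_lt ?_⟩
  rw [Finset.sum_add_distrib, Finset.sum_const, Finset.card_univ, nsmul_eq_mul,
    add_lt_add_iff_left, mul_div_assoc', div_lt_iff₀ (by positivity)]
  linarith

lemma ciInf_ciSup_eq_of_forall_le {α β : Type*} [Nonempty β] {L : α → β → ℝ} {c : ℝ}
    (hbdd : ∀ t, BddAbove (range fun x => L x t)) (hupper : ∀ ε > 0, ∃ t, ∀ x, L x t ≤ c + ε)
    (hlower : ∀ t, ∃ x, c ≤ L x t) : ⨅ t, ⨆ x, L x t = c := by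
  have hsup : ∀ t, c ≤ ⨆ x, L x t := fun t =>
    let ⟨x, hx⟩ := hlower t
    le_ciSup_of_le (hbdd t) x hx
  have : Nonempty α := let ⟨x, _⟩ := hlower (Classical.arbitrary β); ⟨x⟩
  refine le_antisymm (le_of_forall_pos_le_add fun ε hε => ?_) (le_ciInf hsup)
  obtain ⟨t, ht⟩ := hupper ε hε
  exact (ciInf_le ⟨c, forall_mem_range.2 hsup⟩ t).trans (ciSup_le ht)

section Slack

variable {n H : ℕ} (E : Matrix (Fin H) (Fin n) ℝ)

def Feasible (b : Fin H → ℝ) (x : Fin n → ℝ) : Prop :=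
  (∀ i, x i ∈ Icc (-1 : ℝ) 1) ∧ ∀ h, (1 / (n : ℝ)) * ∑ i, E h i * x i = b h

lemma slack_eq_dotProduct (w b : Fin H → ℝ) :
    slack E w b = -(b ⬝ᵥ w) + (1 / (n : ℝ)) * ∑ i, Psi ((w ᵥ* E) i) :=
  rfl

lemma slack_eq_of_feasible {b : Fin H → ℝ} {x : Fin n → ℝ} (w : Fin H → ℝ) (hx : Feasible E b x) :
    slack E w b = (1 / (n : ℝ)) * ∑ i, (Psi ((w ᵥ* E) i) - (w ᵥ* E) i * x i) := by
  have hb : b = (1 / (n : ℝ)) • (E *ᵥ x) := funext fun h => (hx.2 h).symm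
  have hbw : b ⬝ᵥ w = (1 / (n : ℝ)) * ∑ i, (w ᵥ* E) i * x i := by
    rw [hb, smul_dotProduct, dotProduct_comm, dotProduct_mulVec, smul_eq_mul]; rfl
  rw [slack_eq_dotProduct, Finset.sum_sub_distrib, mul_sub, hbw]
  ring

lemma slack_nonneg_of_feasible {b : Fin H → ℝ} {x : Fin n → ℝ} (w : Fin H → ℝ)
    (hx : Feasible E b x) : 0 ≤ slack E w b := by
  rw [slack_eq_of_feasible E w hx]
  exact mul_nonneg (by positivity)
    (Finset.sum_nonneg fun i _ => sub_nonneg.2 (mul_le_Psi _ (hx.1 i)))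

lemma ciInf_slack_le {b : Fin H → ℝ} {x : Fin n → ℝ} (hx : Feasible E b x) (w : Fin H → ℝ) :
    ⨅ w, slack E w b ≤ slack E w b :=
  ciInf_le ⟨0, forall_mem_range.2 fun w => slack_nonneg_of_feasible E w hx⟩ w

lemma slack_zero_le (b : Fin H → ℝ) : slack E 0 b ≤ 2 * log 2 := by
  have hn : 1 / (n : ℝ) * n ≤ 1 := by
    rcases eq_or_ne (n : ℝ) 0 with h | h
    · simp [h]
    · rw [one_div_mul_cancel h]
  simp only [slack_eq_dotProduct, zero_vecMul, Pi.zero_apply, Psi_zero, dotProduct_zero,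
    Finset.sum_const, Finset.card_univ, Fintype.card_fin, nsmul_eq_mul, neg_zero, zero_add]
  nlinarith [log_pos one_lt_two]

lemma continuous_slack (b : Fin H → ℝ) : Continuous fun w => slack E w b := by
  simp only [slack_eq_dotProduct]
  fun_prop

lemma hasDerivAt_slack_line (w v b : Fin H → ℝ) :
    HasDerivAt (fun s : ℝ => slack E (w + s • v) b)
      ((1 / (n : ℝ)) * ∑ i, tanhHalf ((w ᵥ* E) i) * (v ᵥ* E) i - b ⬝ᵥ v) 0 := by
  have hline : ∀ a c : ℝ, HasDerivAt (fun s : ℝ => a + s * c) c 0 := fun a c => by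
    simpa using ((hasDerivAt_id (0 : ℝ)).mul_const c).const_add a
  have hPsi : ∀ i, HasDerivAt (fun s : ℝ => Psi ((w ᵥ* E) i + s * (v ᵥ* E) i))
      (tanhHalf ((w ᵥ* E) i) * (v ᵥ* E) i) 0 := fun i =>
    (hasDerivAt_Psi _).comp_of_eq 0 (hline _ _) (by simp)
  simp only [slack_eq_dotProduct, add_vecMul, smul_vecMul, dotProduct_add, dotProduct_smul,
    Pi.add_apply, Pi.smul_apply, smul_eq_mul]
  refine ((hline (b ⬝ᵥ w) (b ⬝ᵥ v)).fun_neg.fun_add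
    ((HasDerivAt.fun_sum fun i _ => hPsi i).const_mul (1 / (n : ℝ)))).congr_deriv ?_
  ring

lemma mean_bitXent_tanhHalf {b : Fin H → ℝ} {x : Fin n → ℝ} (hx : Feasible E b x)
    (w : Fin H → ℝ) :
    (1 / (n : ℝ)) * ∑ i, bitXent (x i) (tanhHalf ((w ᵥ* E) i)) = 1 / 2 * slack E w b := by
  simp only [slack_eq_of_feasible E w hx, bitXent_tanhHalf, ← Finset.sum_div]
  ring

/-- `γ` need not attain its infimum (it does not when every feasible `x` touches the boundary of
the cube), but this coercive perturbation does. -/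
noncomputable def regSlack (δ : ℝ) (w b : Fin H → ℝ) : ℝ := slack E w b + δ * (w ⬝ᵥ w)

lemma exists_isMinOn_regSlack {δ : ℝ} (hδ : 0 < δ) {b : Fin H → ℝ} {x : Fin n → ℝ}
    (hx : Feasible E b x) : ∃ w, IsMinOn (fun w => regSlack E δ w b) univ w := by
  simp only [isMinOn_univ_iff]
  refine ((continuous_slack E b).add (continuous_const.mul (by fun_prop))).exists_forall_le ?_
  refine tendsto_atTop_mono (fun w => ?_) ((tendsto_pow_atTop two_ne_zero).comp
    tendsto_norm_cocompact_atTop |>.const_mul_atTop hδ)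
  have hnorm : ‖w‖ ^ 2 ≤ w ⬝ᵥ w := by
    refine (Real.le_sqrt (norm_nonneg w) (dotProduct_self_nonneg w)).1 ?_
    refine (pi_norm_le_iff_of_nonneg (sqrt_nonneg _)).2 fun h => ?_
    exact Real.abs_le_sqrt (by simpa [sq] using sq_le_dotProduct_self w h)
  have := slack_nonneg_of_feasible E w hx
  simp only [Function.comp_apply, Pi.add_apply, Pi.mul_apply]
  nlinarith

lemma first_order_condition_regSlack {δ : ℝ} {w b : Fin H → ℝ}
    (hw : IsMinOn (fun w => regSlack E δ w b) univ w) (v : Fin H → ℝ) :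
    (1 / (n : ℝ)) * ∑ i, tanhHalf ((w ᵥ* E) i) * (v ᵥ* E) i = (b - (2 * δ) • w) ⬝ᵥ v := by
  have hsq : HasDerivAt (fun s : ℝ => (w + s • v) ⬝ᵥ (w + s • v)) (2 * (w ⬝ᵥ v)) 0 := by
    have h : (fun s : ℝ => (w + s • v) ⬝ᵥ (w + s • v))
        = fun s => w ⬝ᵥ w + s * (2 * (w ⬝ᵥ v)) + s ^ 2 * (v ⬝ᵥ v) := by
      funext s
      simp only [dotProduct_add, add_dotProduct, dotProduct_smul, smul_dotProduct, smul_eq_mul,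
        dotProduct_comm v w]
      ring
    rw [h]
    simpa using (((hasDerivAt_id (0 : ℝ)).mul_const (2 * (w ⬝ᵥ v))).const_add (w ⬝ᵥ w)).fun_add
      ((hasDerivAt_pow 2 (0 : ℝ)).mul_const (v ⬝ᵥ v))
  have hmin : IsLocalMin (fun s : ℝ => regSlack E δ (w + s • v) b) 0 :=
    Eventually.of_forall fun s => by simpa [regSlack] using hw (mem_univ (w + s • v))
  have h₀ := hmin.hasDerivAt_eq_zero ((hasDerivAt_slack_line E w v b).add (hsq.const_mul δ))
  rw [sub_dotProduct, smul_dotProduct, smul_eq_mul]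
  linarith

section Minimizer

variable {E} {δ : ℝ} {w b : Fin H → ℝ} (hw : IsMinOn (fun w => regSlack E δ w b) univ w)
include hw

lemma moment_eq_of_isMinOn_regSlack (h : Fin H) :
    (1 / (n : ℝ)) * ∑ i, E h i * tanhHalf ((w ᵥ* E) i) = b h - 2 * δ * w h := by
  classical
  simpa [dotProduct_single, mul_comm] using first_order_condition_regSlack E hw (Pi.single h 1)

lemma slack_eq_of_isMinOn_regSlack :
    slack E w b = 2 * ((1 / (n : ℝ)) * ∑ i, binEntropy ((1 + tanhHalf ((w ᵥ* E) i)) / 2))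
      - 2 * δ * (w ⬝ᵥ w) := by
  have hbw := first_order_condition_regSlack E hw w
  rw [sub_dotProduct, smul_dotProduct, smul_eq_mul] at hbw
  have hPsi : ∑ i, Psi ((w ᵥ* E) i) = ∑ i, tanhHalf ((w ᵥ* E) i) * (w ᵥ* E) i
      + 2 * ∑ i, binEntropy ((1 + tanhHalf ((w ᵥ* E) i)) / 2) := by
    rw [Finset.mul_sum, ← Finset.sum_add_distrib]
    exact Finset.sum_congr rfl fun i _ => by linarith [Psi_sub_mul_tanhHalf ((w ᵥ* E) i)]
  rw [slack_eq_dotProduct, hPsi]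
  linarith

lemma mul_dotProduct_self_le_of_isMinOn_regSlack {x : Fin n → ℝ} (hx : Feasible E b x) :
    δ * (w ⬝ᵥ w) ≤ 2 * log 2 := by
  have h₀ : regSlack E δ w b ≤ regSlack E δ 0 b := hw (mem_univ 0)
  have := slack_zero_le E b
  have := slack_nonneg_of_feasible E w hx
  simp only [regSlack, dotProduct_zero, mul_zero, add_zero] at h₀
  linarith

end Minimizer

/-- A minimizer `W k` of `regSlack E δ` with `δ = 1 / (k + 1)` makes `tanhHalf (W k ᵥ* E)`
feasible up to the error `2 δ W k`, which tends to zero since `δ (W k ⬝ᵥ W k) ≤ 2 log 2`. -/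
theorem exists_feasible_half_iInf_slack_le {b : Fin H → ℝ} (hfeas : ∃ x, Feasible E b x) :
    ∃ x, Feasible E b x ∧
      1 / 2 * ⨅ w, slack E w b ≤ (1 / (n : ℝ)) * ∑ i, binEntropy ((1 + x i) / 2) := by
  obtain ⟨x₀, hx₀⟩ := hfeas
  have hδ : ∀ k : ℕ, 0 < 1 / ((k : ℝ) + 1) := fun k => by positivity
  choose W hW using fun k => exists_isMinOn_regSlack E (hδ k) hx₀
  set t : ℕ → Fin n → ℝ := fun k i => tanhHalf ((W k ᵥ* E) i)
  set A : (Fin n → ℝ) → Fin H → ℝ := fun x => (1 / (n : ℝ)) • (E *ᵥ x)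
  set K : Set (Fin n → ℝ) := (univ.pi fun _ => Icc (-1 : ℝ) 1) ∩
    {x | 1 / 2 * ⨅ w, slack E w b ≤ (1 / (n : ℝ)) * ∑ i, binEntropy ((1 + x i) / 2)}
  have hK : IsCompact K := (isCompact_univ_pi fun _ => isCompact_Icc).inter_right
    (isClosed_le continuous_const (by fun_prop))
  have htK : ∀ k, t k ∈ K := fun k => by
    refine ⟨fun i _ => Ioo_subset_Icc_self (tanhHalf_mem_Ioo _), ?_⟩
    have := slack_eq_of_isMinOn_regSlack (hW k)
    have := ciInf_slack_le E hx₀ (W k)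
    have := mul_nonneg (hδ k).le (dotProduct_self_nonneg (W k))
    simp only [mem_ofPred_eq, t]
    linarith
  have hAt : Tendsto (fun k => A (t k)) atTop (𝓝 b) := by
    have hA : ∀ k, A (t k) = b - (2 * (1 / ((k : ℝ) + 1))) • W k := fun k => funext fun h => by
      change 1 / (n : ℝ) * ∑ i, E h i * t k i = b h - 2 * (1 / ((k : ℝ) + 1)) * W k h
      rw [moment_eq_of_isMinOn_regSlack (hW k) h]
    have hlim := tendsto_smul_nhds_zero_of_mul_dotProduct_self_le (W := W) (C := 2 * (2 * log 2))
      (by simpa using tendsto_one_div_add_atTop_nhds_zero_nat.const_mul (2 : ℝ))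
      (fun k => (mul_pos two_pos (hδ k)).le)
      (fun k => by
        rw [mul_assoc]
        linarith [mul_dotProduct_self_le_of_isMinOn_regSlack (hW k) hx₀])
    simpa [hA] using (tendsto_const_nhds (x := b)).sub hlim
  obtain ⟨x, hxK, hAx⟩ : b ∈ A '' K :=
    (hK.image (by fun_prop)).isClosed.mem_of_tendsto hAt
      (Eventually.of_forall fun k => mem_image_of_mem A (htK k))
  exact ⟨x, ⟨fun i => hxK.1 i (mem_univ i), fun h => congrFun hAx h⟩, hxK.2⟩

end Slack

section Loss

variable {n V H : ℕ}

lemma mean_xent_eq_sum (X Xt : Fin V → Fin n → ℝ) :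
    (1 / (n : ℝ)) * ∑ i, xent (fun v => X v i) (fun v => Xt v i)
      = ∑ v, (1 / (n : ℝ)) * ∑ i, bitXent (X v i) (Xt v i) := by
  simp only [xent_eq_sum_bitXent]
  rw [Finset.sum_comm, Finset.mul_sum]

lemma mean_xent_le {X Xt : Fin V → Fin n → ℝ} (hX : ∀ v i, X v i ∈ Icc (-1 : ℝ) 1)
    (hXt : ∀ v i, Xt v i ∈ Ioo (-1 : ℝ) 1) :
    (1 / (n : ℝ)) * ∑ i, xent (fun v => X v i) (fun v => Xt v i)
      ≤ ∑ v, (1 / (n : ℝ)) * ∑ i, (log (2 / (1 + Xt v i)) + log (2 / (1 - Xt v i))) := by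
  rw [mean_xent_eq_sum]
  exact Finset.sum_le_sum fun v _ => mul_le_mul_of_nonneg_left
    (Finset.sum_le_sum fun i _ => bitXent_le (hX v i) (hXt v i)) (by positivity)

lemma mean_xent_tanhHalf (E : Matrix (Fin H) (Fin n) ℝ) {B : Fin V → Fin H → ℝ}
    {X : Fin V → Fin n → ℝ} (hX : ∀ v, Feasible E (B v) (X v)) (W : Fin V → Fin H → ℝ) :
    (1 / (n : ℝ)) * ∑ i, xent (fun v => X v i) (fun v => tanhHalf ((W v ᵥ* E) i))
      = 1 / 2 * ∑ v, slack E (W v) (B v) := by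
  rw [mean_xent_eq_sum, Finset.mul_sum]
  exact Finset.sum_congr rfl fun v _ => mean_bitXent_tanhHalf E (hX v) (W v)

lemma exists_feasible_half_sum_iInf_slack_le_mean_xent (E : Matrix (Fin H) (Fin n) ℝ)
    {B : Fin V → Fin H → ℝ} (hfeas : ∀ v, ∃ x, Feasible E (B v) x) :
    ∃ X : Fin V → Fin n → ℝ, (∀ v, Feasible E (B v) (X v)) ∧
      ∀ Xt : Fin V → Fin n → ℝ, (∀ v i, Xt v i ∈ Ioo (-1 : ℝ) 1) →
        1 / 2 * ∑ v, ⨅ w, slack E w (B v)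
          ≤ (1 / (n : ℝ)) * ∑ i, xent (fun v => X v i) (fun v => Xt v i) := by
  choose X hX hent using fun v => exists_feasible_half_iInf_slack_le E (hfeas v)
  refine ⟨X, hX, fun Xt hXt => ?_⟩
  rw [mean_xent_eq_sum, Finset.mul_sum]
  exact Finset.sum_le_sum fun v _ => (hent v).trans (mul_le_mul_of_nonneg_left
    (Finset.sum_le_sum fun i _ => binEntropy_le_bitXent ((hX v).1 i) (hXt v i)) (by positivity))

end Loss

theorem minimax_reconstruction_loss_general
    (n V H : ℕ)
    (E : Fin H → Fin n → ℝ)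
    (B : Fin V → Fin H → ℝ)
    (hfeas : ∃ X : Fin V → Fin n → ℝ,
      (∀ v i, X v i ∈ Set.Icc (-1 : ℝ) 1) ∧
      ∀ v h, (1 / (n : ℝ)) * ∑ i, E h i * X v i = B v h) :
    (⨅ Xt : {Xt : Fin V → Fin n → ℝ // ∀ v i, Xt v i ∈ Set.Ioo (-1 : ℝ) 1},
      ⨆ X : {X : Fin V → Fin n → ℝ //
          (∀ v i, X v i ∈ Set.Icc (-1 : ℝ) 1) ∧
          ∀ v h, (1 / (n : ℝ)) * ∑ i, E h i * X v i = B v h},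
        (1 / (n : ℝ)) * ∑ i, xent (fun v => X.1 v i) (fun v => Xt.1 v i))
      = (1 / 2) * ∑ v, ⨅ w : Fin H → ℝ, slack E w (B v) := by
  obtain ⟨X₀, hX₀⟩ := hfeas
  have : Nonempty {Xt : Fin V → Fin n → ℝ // ∀ v i, Xt v i ∈ Ioo (-1 : ℝ) 1} :=
    ⟨⟨0, fun _ _ => by norm_num⟩⟩
  refine ciInf_ciSup_eq_of_forall_le (fun Xt => ⟨_, forall_mem_range.2 fun X =>
    mean_xent_le X.2.1 Xt.2⟩) (fun ε hε => ?_) (fun Xt => ?_)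
  · obtain ⟨W, hW⟩ := exists_sum_lt_sum_ciInf_add (fun v w => slack E w (B v)) (mul_pos two_pos hε)
    refine ⟨⟨fun v i => tanhHalf ((W v ᵥ* E) i), fun v i => tanhHalf_mem_Ioo _⟩, fun X => ?_⟩
    rw [mean_xent_tanhHalf E (fun v => ⟨X.2.1 v, X.2.2 v⟩) W]
    linarith
  · obtain ⟨X, hX, hle⟩ := exists_feasible_half_sum_iInf_slack_le_mean_xent E
      (fun v => ⟨X₀ v, hX₀.1 v, hX₀.2 v⟩)
    exact ⟨⟨X, fun v => (hX v).1, fun v => (hX v).2⟩, hle Xt.1 Xt.2⟩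

/-- The minimax value of the binary autoencoding game equals the sum of the
bitwise minimized slack functions. -/
theorem minimax_reconstruction_loss
    (n V H : ℕ) (hn : 0 < n) (hV : 0 < V) (hH : 0 < H)
    (E : Fin H → Fin n → ℝ) (hE : ∀ h i, E h i ∈ Set.Icc (-1 : ℝ) 1)
    (B : Fin V → Fin H → ℝ)
    (hfeas : ∃ X : Fin V → Fin n → ℝ,
      (∀ v i, X v i ∈ Set.Icc (-1 : ℝ) 1) ∧
      ∀ v h, (1 / (n : ℝ)) * ∑ i, E h i * X v i = B v h) :
    (⨅ Xt : {Xt : Fin V → Fin n → ℝ // ∀ v i, Xt v i ∈ Set.Ioo (-1 : ℝ) 1},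
      ⨆ X : {X : Fin V → Fin n → ℝ //
          (∀ v i, X v i ∈ Set.Icc (-1 : ℝ) 1) ∧
          ∀ v h, (1 / (n : ℝ)) * ∑ i, E h i * X v i = B v h},
        (1 / (n : ℝ)) * ∑ i, xent (fun v => X.1 v i) (fun v => Xt.1 v i))
      = (1 / 2) * ∑ v, ⨅ w : Fin H → ℝ, slack E w (B v) :=
  minimax_reconstruction_loss_general n V H E B hfeas
end

section
/- Let m ∈ ℝ. Define ℓ₊(y) = ln(2/(1+y)), ℓ₋(y) = ln(2/(1−y)) and Γ(y) = ℓ₋(y) − ℓ₊(y) = ln((1+y)/(1−y)) for y ∈ (−1,1). Then the infimum over y ∈ (−1,1) of ℓ₊(y) + ℓ₋(y) + |m − Γ(y)| equals Ψ(m) = ln(1+e^m) + ln(1+e^{−m}), and this infimum is attained uniquely at y* = (1 − e^{−m})/(1 + e^{−m}). -/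
lemma A_le (a b : ℝ) : Real.log (1 + Real.exp a) - Real.log (1 + Real.exp b) ≤ max (a - b) 0 := by
  rcases le_or_gt a b with h | h
  · have : Real.log (1 + Real.exp a) ≤ Real.log (1 + Real.exp b) := by
      apply Real.log_le_log (by positivity)
      have := Real.exp_le_exp.2 h; linarith
    have := le_max_right (a - b) (0:ℝ); linarith
  · have hm : max (a - b) 0 = a - b := max_eq_left (by linarith)
    rw [hm]
    have h1 : Real.log (1 + Real.exp a) ≤ Real.log (Real.exp (a - b) * (1 + Real.exp b)) := by
      apply Real.log_le_log (by positivity)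
      have h2 : (1:ℝ) < Real.exp (a - b) := by simpa using Real.exp_lt_exp.2 (show (0:ℝ) < a - b by linarith)
      have h3 : Real.exp (a - b) * Real.exp b = Real.exp a := by
        rw [← Real.exp_add]; ring_nf
      nlinarith [Real.exp_pos b]
    rw [Real.log_mul (Real.exp_ne_zero _) (by positivity), Real.log_exp] at h1
    linarith

lemma A_lt (a b : ℝ) (h : a ≠ b) :
    Real.log (1 + Real.exp a) - Real.log (1 + Real.exp b) < max (a - b) 0 := by
  rcases lt_or_gt_of_ne h with h | h
  · have : Real.log (1 + Real.exp a) < Real.log (1 + Real.exp b) := by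
      apply Real.log_lt_log (by positivity)
      have := Real.exp_lt_exp.2 h; linarith
    have := le_max_right (a - b) (0:ℝ); linarith
  · have hm : max (a - b) 0 = a - b := max_eq_left (by linarith)
    rw [hm]
    have h1 : Real.log (1 + Real.exp a) < Real.log (Real.exp (a - b) * (1 + Real.exp b)) := by
      apply Real.log_lt_log (by positivity)
      have h2 : (1:ℝ) < Real.exp (a - b) := by simpa using Real.exp_lt_exp.2 (show (0:ℝ) < a - b by linarith)
      have h3 : Real.exp (a - b) * Real.exp b = Real.exp a := by
        rw [← Real.exp_add]; ring_nf
      nlinarith [Real.exp_pos b]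
    rw [Real.log_mul (Real.exp_ne_zero _) (by positivity), Real.log_exp] at h1
    linarith

lemma psi_lip (m s : ℝ) : Psi m ≤ Psi s + |m - s| := by
  have h1 := A_le m s
  have h2 := A_le (-m) (-s)
  unfold Psi
  rcases le_total m s with h | h
  · have : |m - s| = s - m := by rw [abs_of_nonpos (by linarith)]; ring
    rw [this]
    have e1 : max (m - s) 0 = 0 := max_eq_right (by linarith)
    have e2 : max (-m - -s) 0 = s - m := by rw [max_eq_left (by linarith : (0:ℝ) ≤ -m - -s)]; ring
    rw [e1] at h1; rw [e2] at h2; linarith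
  · have : |m - s| = m - s := abs_of_nonneg (by linarith)
    rw [this]
    have e1 : max (m - s) 0 = m - s := max_eq_left (by linarith)
    have e2 : max (-m - -s) 0 = 0 := max_eq_right (by linarith)
    rw [e1] at h1; rw [e2] at h2; linarith

lemma psi_lip_strict (m s : ℝ) (h : m ≠ s) : Psi m < Psi s + |m - s| := by
  unfold Psi
  rcases lt_or_gt_of_ne h with h | h
  · have h1 := A_le m s
    have h2 := A_lt (-m) (-s) (by intro hc; apply h.ne; linarith)
    have : |m - s| = s - m := by rw [abs_of_nonpos (by linarith)]; ring
    rw [this]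
    have e1 : max (m - s) 0 = 0 := max_eq_right (by linarith)
    have e2 : max (-m - -s) 0 = s - m := by rw [max_eq_left (by linarith : (0:ℝ) ≤ -m - -s)]; ring
    rw [e1] at h1; rw [e2] at h2; linarith
  · have h1 := A_lt m s h.ne'
    have h2 := A_le (-m) (-s)
    have : |m - s| = m - s := abs_of_nonneg (by linarith)
    rw [this]
    have e1 : max (m - s) 0 = m - s := max_eq_left (by linarith)
    have e2 : max (-m - -s) 0 = 0 := max_eq_right (by linarith)
    rw [e1] at h1; rw [e2] at h2; linarith

lemma loss_eq_psi (y : ℝ) (hy : y ∈ Set.Ioo (-1:ℝ) 1) :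
    Real.log (2 / (1 + y)) + Real.log (2 / (1 - y))
      = Psi (Real.log ((1 + y) / (1 - y))) := by
  obtain ⟨h1, h2⟩ := hy
  have hp : (0:ℝ) < 1 + y := by linarith
  have hn : (0:ℝ) < 1 - y := by linarith
  set s := Real.log ((1 + y) / (1 - y)) with hs
  have hexp : Real.exp s = (1 + y) / (1 - y) := Real.exp_log (by positivity)
  have hexp' : Real.exp (-s) = (1 - y) / (1 + y) := by
    rw [Real.exp_neg, hexp, inv_div]
  unfold Psi
  rw [hexp, hexp']
  have e1 : 1 + (1 + y) / (1 - y) = 2 / (1 - y) := by field_simp; ring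
  have e2 : 1 + (1 - y) / (1 + y) = 2 / (1 + y) := by field_simp; ring
  rw [e1, e2]; ring

lemma ystar_mem (m : ℝ) :
    (1 - Real.exp (-m)) / (1 + Real.exp (-m)) ∈ Set.Ioo (-1 : ℝ) 1 := by
  have ha : 0 < Real.exp (-m) := Real.exp_pos _
  constructor
  · rw [lt_div_iff₀ (by linarith)]; linarith
  · rw [div_lt_one (by linarith)]; linarith

lemma gamma_ystar (m : ℝ) :
    Real.log ((1 + (1 - Real.exp (-m)) / (1 + Real.exp (-m))) /
      (1 - (1 - Real.exp (-m)) / (1 + Real.exp (-m)))) = m := by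
  have ha : 0 < Real.exp (-m) := Real.exp_pos _
  have hE : Real.exp (-m) = (Real.exp m)⁻¹ := Real.exp_neg m
  have hEp : 0 < Real.exp m := Real.exp_pos _
  have : (1 + (1 - Real.exp (-m)) / (1 + Real.exp (-m))) /
      (1 - (1 - Real.exp (-m)) / (1 + Real.exp (-m))) = Real.exp m := by
    rw [hE]; field_simp; ring
  rw [this, Real.log_exp]


/-- For the cross-entropy partial losses `ℓ₊(y) = ln(2/(1+y))`, `ℓ₋(y) = ln(2/(1-y))` and
`Γ(y) = ln((1+y)/(1-y))`, the infimum over `y ∈ (-1,1)` of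
`ℓ₊(y) + ℓ₋(y) + |m - Γ(y)|` equals `Ψ(m)`, attained uniquely at
`y* = (1 - e⁻ᵐ)/(1 + e⁻ᵐ)`. -/
theorem pointwise_inf_is_Psi (m : ℝ) :
    (⨅ y : Set.Ioo (-1 : ℝ) 1,
        (Real.log (2 / (1 + (y : ℝ))) + Real.log (2 / (1 - (y : ℝ))) +
          |m - Real.log ((1 + (y : ℝ)) / (1 - (y : ℝ)))|))
      = Psi m
    ∧ (1 - Real.exp (-m)) / (1 + Real.exp (-m)) ∈ Set.Ioo (-1 : ℝ) 1
    ∧ (Real.log (2 / (1 + (1 - Real.exp (-m)) / (1 + Real.exp (-m)))) +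
        Real.log (2 / (1 - (1 - Real.exp (-m)) / (1 + Real.exp (-m)))) +
        |m - Real.log ((1 + (1 - Real.exp (-m)) / (1 + Real.exp (-m))) /
                        (1 - (1 - Real.exp (-m)) / (1 + Real.exp (-m))))|)
      = Psi m
    ∧ ∀ y ∈ Set.Ioo (-1 : ℝ) 1,
        (Real.log (2 / (1 + y)) + Real.log (2 / (1 - y)) +
          |m - Real.log ((1 + y) / (1 - y))|) = Psi m →
        y = (1 - Real.exp (-m)) / (1 + Real.exp (-m)) := by
  have hmem := ystar_mem m
  have hval : (Real.log (2 / (1 + (1 - Real.exp (-m)) / (1 + Real.exp (-m)))) +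
        Real.log (2 / (1 - (1 - Real.exp (-m)) / (1 + Real.exp (-m)))) +
        |m - Real.log ((1 + (1 - Real.exp (-m)) / (1 + Real.exp (-m))) /
                        (1 - (1 - Real.exp (-m)) / (1 + Real.exp (-m))))|) = Psi m := by
    rw [loss_eq_psi _ hmem, gamma_ystar, sub_self, abs_zero, add_zero]
  have hlb : ∀ y ∈ Set.Ioo (-1:ℝ) 1,
      Psi m ≤ Real.log (2 / (1 + y)) + Real.log (2 / (1 - y)) +
        |m - Real.log ((1 + y) / (1 - y))| := by
    intro y hy
    rw [loss_eq_psi y hy]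
    exact psi_lip m _
  haveI : Nonempty ↑(Set.Ioo (-1:ℝ) 1) := ⟨⟨_, hmem⟩⟩
  refine ⟨?_, hmem, hval, ?_⟩
  · apply le_antisymm
    · exact (ciInf_le ⟨Psi m, by rintro x ⟨z, rfl⟩; exact hlb z z.2⟩
        ⟨_, hmem⟩).trans_eq hval
    · exact le_ciInf fun z => hlb z z.2
  · intro y hy heq
    rw [loss_eq_psi y hy] at heq
    set s := Real.log ((1 + y) / (1 - y)) with hs
    have hsm : s = m := by
      by_contra hne
      have := psi_lip_strict m s (fun h => hne h.symm)
      linarith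
    obtain ⟨h1, h2⟩ := hy
    have hp : (0:ℝ) < 1 + y := by linarith
    have hn : (0:ℝ) < 1 - y := by linarith
    have hexp : (1 + y) / (1 - y) = Real.exp m := by
      rw [← hsm, hs, Real.exp_log (by positivity)]
    have hE : Real.exp (-m) = (Real.exp m)⁻¹ := Real.exp_neg m
    have hEp : 0 < Real.exp m := Real.exp_pos _
    rw [div_eq_iff hn.ne'] at hexp
    rw [hE, eq_div_iff (by positivity : (0:ℝ) < 1 + (Real.exp m)⁻¹).ne']
    field_simp
    nlinarith [hexp]
end

section
/- Let ℓ₊ : [−1,1] → ℝ and ℓ₋ : [−1,1] → ℝ be continuous, with ℓ₊ monotone nonincreasing and ℓ₋ monotone nondecreasing, and set Γ(y) = ℓ₋(y) − ℓ₊(y). Then for every m ∈ ℝ there exists y* ∈ [−1,1] with Γ(y*) = max(Γ(−1), min(m, Γ(1))), and the infimum over y ∈ [−1,1] of ℓ₊(y) + ℓ₋(y) + |m − Γ(y)| is attained at y* with value ℓ₊(y*) + ℓ₋(y*) + |m − Γ(y*)|. In particular this value equals −m + 2·ℓ₋(−1) when m ≤ Γ(−1), equals ℓ₊(y*) + ℓ₋(y*)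 with Γ(y*) = m when Γ(−1) < m < Γ(1), and equals m + 2·ℓ₊(1) when m ≥ Γ(1). -/
/-- For general partial losses `ℓ₊` (continuous, nonincreasing) and `ℓ₋` (continuous,
nondecreasing) on `[-1,1]`, with `Γ = ℓ₋ - ℓ₊`, for every `m ∈ ℝ` there is a point
`y* ∈ [-1,1]` with `Γ(y*) = max(Γ(-1), min(m, Γ(1)))` attaining the infimum over
`y ∈ [-1,1]` of `ℓ₊(y) + ℓ₋(y) + |m - Γ(y)|`, with a piecewise value as described. -/
theorem general_loss_pointwise_minimization
    (lp lm : ℝ → ℝ)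
    (hlpc : ContinuousOn lp (Set.Icc (-1 : ℝ) 1))
    (hlmc : ContinuousOn lm (Set.Icc (-1 : ℝ) 1))
    (hlp : AntitoneOn lp (Set.Icc (-1 : ℝ) 1))
    (hlm : MonotoneOn lm (Set.Icc (-1 : ℝ) 1))
    (m : ℝ) :
    ∃ ystar ∈ Set.Icc (-1 : ℝ) 1,
      (lm ystar - lp ystar) = max (lm (-1) - lp (-1)) (min m (lm 1 - lp 1))
      ∧ (∀ y ∈ Set.Icc (-1 : ℝ) 1,
          lp ystar + lm ystar + |m - (lm ystar - lp ystar)|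
            ≤ lp y + lm y + |m - (lm y - lp y)|)
      ∧ (m ≤ lm (-1) - lp (-1) →
          lp ystar + lm ystar + |m - (lm ystar - lp ystar)| = -m + 2 * lm (-1))
      ∧ (lm (-1) - lp (-1) < m → m < lm 1 - lp 1 →
          (lm ystar - lp ystar) = m ∧
          lp ystar + lm ystar + |m - (lm ystar - lp ystar)| = lp ystar + lm ystar)
      ∧ (lm 1 - lp 1 ≤ m →
          lp ystar + lm ystar + |m - (lm ystar - lp ystar)| = m + 2 * lp 1) := by
  have h01 : (-1:ℝ) ∈ Set.Icc (-1:ℝ) 1 := by norm_num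
  have h11 : (1:ℝ) ∈ Set.Icc (-1:ℝ) 1 := by norm_num
  have hΓmono : ∀ a ∈ Set.Icc (-1:ℝ) 1, ∀ b ∈ Set.Icc (-1:ℝ) 1, a ≤ b →
      lm a - lp a ≤ lm b - lp b := by
    intro a ha b hb hab
    have h1 := hlm ha hb hab
    have h2 := hlp ha hb hab
    linarith
  have hG : lm (-1) - lp (-1) ≤ lm 1 - lp 1 := hΓmono _ h01 _ h11 (by norm_num)
  rcases le_or_gt m (lm (-1) - lp (-1)) with h1 | h1
  · -- ystar = -1
    refine ⟨-1, h01, ?_, ?_, ?_, ?_, ?_⟩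
    · rw [min_eq_left (h1.trans hG), max_eq_left h1]
    · intro y hy
      have hy1 : lm (-1) - lp (-1) ≤ lm y - lp y := hΓmono _ h01 _ hy hy.1
      have hlmy : lm (-1) ≤ lm y := hlm h01 hy hy.1
      rw [abs_of_nonpos (by linarith), abs_of_nonpos (by linarith)]
      linarith
    · intro _
      rw [abs_of_nonpos (by linarith)]; ring
    · intro h _; linarith
    · intro h2
      have hlm1 : lm (-1) ≤ lm 1 := hlm h01 h11 (by norm_num)
      have hlp1 : lp 1 ≤ lp (-1) := hlp h01 h11 (by norm_num)
      rw [abs_of_nonpos (by linarith)]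
      linarith
  · rcases le_or_gt (lm 1 - lp 1) m with h2 | h2
    · -- ystar = 1
      refine ⟨1, h11, ?_, ?_, ?_, ?_, ?_⟩
      · rw [min_eq_right h2, max_eq_right hG]
      · intro y hy
        have hy1 : lm y - lp y ≤ lm 1 - lp 1 := hΓmono _ hy _ h11 hy.2
        have hlpy : lp 1 ≤ lp y := hlp hy h11 hy.2
        rw [abs_of_nonneg (by linarith), abs_of_nonneg (by linarith)]
        linarith
      · intro h; linarith
      · intro _ h; linarith
      · intro _
        rw [abs_of_nonneg (by linarith)]; ring
    · -- interior: IVT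
      have hΓc : ContinuousOn (fun y => lm y - lp y) (Set.Icc (-1:ℝ) 1) :=
        hlmc.sub hlpc
      have hmem : m ∈ Set.Icc (lm (-1) - lp (-1)) (lm 1 - lp 1) :=
        ⟨h1.le, h2.le⟩
      obtain ⟨ystar, hys, hΓy⟩ :=
        intermediate_value_Icc (show (-1:ℝ) ≤ 1 by norm_num) hΓc hmem
      simp only at hΓy
      refine ⟨ystar, hys, ?_, ?_, ?_, ?_, ?_⟩
      · rw [hΓy, min_eq_left h2.le, max_eq_right h1.le]
      · intro y hy
        rw [hΓy, sub_self, abs_zero]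
        rcases le_total (lm y - lp y) m with hc | hc
        · rw [abs_of_nonneg (by linarith)]
          have : lp ystar ≤ lp y := by
            rcases le_total y ystar with hyy | hyy
            · exact hlp hy hys hyy
            · have := hΓmono _ hys _ hy hyy
              have := hlm hys hy hyy
              linarith
          linarith
        · rw [abs_of_nonpos (by linarith)]
          have : lm ystar ≤ lm y := by
            rcases le_total ystar y with hyy | hyy
            · exact hlm hys hy hyy
            · have := hΓmono _ hy _ hys hyy
              have := hlp hy hys hyy
              linarith
          linarith
      · intro h; linarith
      · intro _ _
        rw [hΓy, sub_self, abs_zero]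
        exact ⟨rfl, by ring⟩
      · intro h; linarith
end
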